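/- Let f be the free Q(v)-algebra on generators θ_i (i ∈ I) modulo the quantum Serre relations associated to a graph Γ without loops, graded by N[I] with deg θ_i = i. There exists a unique Q(v)-linear map _i r̄ : f → f satisfying _i r̄(1) = 0, _i r̄(θ_j) = δ_{ij}, and _i r̄(xy) = _i r̄(x)·y + v^{(i,-|x|)}·x·_i r̄(y) for homogeneous x, y, where |x| denotes the degree of x and (,) is the symmetric bilinear form on Z[I] given by the Cartan data of Γ. -/

import Mathlib

noncomputable section
open scoped Classical TensorProduct

/-- The field `ℚ(v)` of rational functions over `ℚ`. -/
abbrev Kq : Type := RatFunc ℚ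

/-- The indeterminate `v`. -/
def vq : Kq := RatFunc.X

/-- The quantum integer `[s] = (v^s - v^{-s})/(v - v⁻¹)`. -/
def qint (s : ℤ) : Kq := (vq ^ s - vq ^ (-s)) / (vq - vq⁻¹)

/-- The quantum factorial `[s]!`. -/
def qfact (n : ℕ) : Kq := ∏ k ∈ Finset.range n, qint (k + 1)

/-- The quantum binomial coefficient. -/
def qbinom (s t : ℕ) : Kq := qfact s / (qfact t * qfact (s - t))

/-- A finite graph without loops on vertex set `I`, recorded by the number
`E i j` of edges joining `i` and `j`. -/
structure GraphData (I : Type) where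
  E : I → I → ℕ
  symm : ∀ i j, E i j = E j i
  loopless : ∀ i, E i i = 0

variable {I : Type}

/-- The Cartan pairing `(i,j) = 2δ_{ij} − #{edges between i and j}`. -/
def cart (G : GraphData I) (i j : I) : ℤ := if i = j then 2 else -(G.E i j : ℤ)

/-- The pairing `(i, μ)` of a vertex with an element `μ ∈ ℕ[I]`. -/
def pairing (G : GraphData I) (i : I) (μ : I →₀ ℕ) : ℤ :=
  μ.sum fun j n => (n : ℤ) * cart G i j

/-- The quantum Serre relation element attached to `i ≠ j`. -/
def serreElem (G : GraphData I) (i j : I) : FreeAlgebra Kq I :=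
  ∑ p ∈ Finset.range (2 + G.E i j),
    (((-1 : Kq) ^ p) * qbinom (1 + G.E i j) p) •
      (FreeAlgebra.ι Kq i ^ p * FreeAlgebra.ι Kq j *
        FreeAlgebra.ι Kq i ^ (1 + G.E i j - p))

/-- The quantum Serre relations. -/
inductive SerreRel (G : GraphData I) : FreeAlgebra Kq I → FreeAlgebra Kq I → Prop
  | serre : ∀ i j, i ≠ j → SerreRel G (serreElem G i j) 0

/-- Lusztig's algebra `f = U⁻` attached to the graph `G`: the free algebra on the
generators `θ_i` modulo the quantum Serre relations. -/
abbrev UM (G : GraphData I) : Type := RingQuot (SerreRel G)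

/-- The generator `θ_i` of `U⁻`. -/
def θ (G : GraphData I) (i : I) : UM G :=
  RingQuot.mkAlgHom Kq (SerreRel G) (FreeAlgebra.ι Kq i)

/-- The monomial `θ_{i_1} ⋯ θ_{i_m}`. -/
def word (G : GraphData I) (l : List I) : UM G := (l.map (θ G)).prod

/-- The degree in `ℕ[I]` of a monomial. -/
def degw (l : List I) : I →₀ ℕ := (l.map fun i => Finsupp.single i 1).sum

/-- The homogeneous component of `U⁻` of degree `μ ∈ ℕ[I]`. -/
def homog (G : GraphData I) (μ : I →₀ ℕ) : Submodule Kq (UM G) :=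
  Submodule.span Kq {x | ∃ l : List I, degw l = μ ∧ x = word G l}

/-!
`_i r̄` is the lower-left entry of the algebra homomorphism `f → M₂(f)` given on generators by
`θ_j ↦ !![θ_j, 0; δ_ij, v^{-(i,j)} θ_j]`: multiplicativity of a lower-triangular representation
is exactly the twisted Leibniz rule, its lower-right entry being `x ↦ v^{-(i,|x|)} x`.
On the free algebra this representation exists trivially, and it kills the quantum Serre
elements: the diagonal entries only rescale them, while on the lower-left entry the terms of
`r̄ (∑ₚ (-1)ᵖ [n,p] θ_a^p θ_b θ_a^{n-p})` telescope by `[n,p+1] [p+1] = [n,p] [n-p]`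
when `i = a`, and add up to Gauss' identity `∑ₚ (-1)ᵖ [n,p] v^{p(n-1)} = 0` when `i = b`.
Uniqueness: monomials span `f`, and the Leibniz rule determines `r̄ (θ_j m)` from `r̄ θ_j`
and `r̄ m`.
-/

lemma vq_ne_zero : vq ≠ 0 := RatFunc.X_ne_zero

lemma vq_pow_ne_one {k : ℕ} (hk : k ≠ 0) : vq ^ k ≠ 1 := by
  intro h
  have hX : (Polynomial.X ^ k : Polynomial ℚ) = 1 := by
    apply RatFunc.algebraMap_injective ℚ
    simpa [vq, RatFunc.algebraMap_X] using h
  simpa [hk] using congrArg Polynomial.natDegree hX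

lemma vq_zpow_sub_zpow_neg_ne_zero {s : ℤ} (hs : 0 < s) : vq ^ s - vq ^ (-s) ≠ 0 := by
  lift s to ℕ using hs.le
  rw [sub_ne_zero, zpow_neg, zpow_natCast]
  intro h
  apply vq_pow_ne_one (k := s + s) (by omega)
  rw [pow_add]
  nth_rewrite 1 [h]
  exact inv_mul_cancel₀ (pow_ne_zero _ vq_ne_zero)

lemma vq_sub_inv_ne_zero : vq - vq⁻¹ ≠ 0 := by
  simpa using vq_zpow_sub_zpow_neg_ne_zero one_pos

lemma qint_ne_zero {s : ℤ} (hs : 0 < s) : qint s ≠ 0 :=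
  div_ne_zero (vq_zpow_sub_zpow_neg_ne_zero hs) vq_sub_inv_ne_zero

lemma qint_one : qint 1 = 1 := by
  simpa [qint] using div_self vq_sub_inv_ne_zero

lemma qint_add (s t : ℤ) : qint (s + t) = vq ^ s * qint t + vq ^ (-t) * qint s := by
  simp only [qint, ← mul_div_assoc, ← add_div]
  congr 1
  simp only [mul_sub, ← zpow_add₀ vq_ne_zero]
  ring_nf

lemma qint_add_one (s : ℤ) : qint (s + 1) = vq * qint s + vq ^ (-s) := by
  rw [add_comm, qint_add, zpow_one, qint_one, mul_one]

lemma qfact_succ (n : ℕ) : qfact (n + 1) = qfact n * qint (n + 1) := Finset.prod_range_succ _ _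

lemma qfact_ne_zero (n : ℕ) : qfact n ≠ 0 :=
  Finset.prod_ne_zero_iff.mpr fun k _ => qint_ne_zero (by omega)

lemma qbinom_zero_right (n : ℕ) : qbinom n 0 = 1 := by
  rw [qbinom, Nat.sub_zero, show qfact 0 = 1 from rfl, one_mul, div_self (qfact_ne_zero n)]

lemma qbinom_self (n : ℕ) : qbinom n n = 1 := by
  rw [qbinom, Nat.sub_self, show qfact 0 = 1 from rfl, mul_one, div_self (qfact_ne_zero n)]

lemma qbinom_succ_mul_qint (p q : ℕ) :
    qbinom (p + q + 1) (p + 1) * qint (p + 1) = qbinom (p + q + 1) p * qint (q + 1) := by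
  rw [qbinom, qbinom, show p + q + 1 - (p + 1) = q by omega, show p + q + 1 - p = q + 1 by omega,
    qfact_succ p, qfact_succ q]
  have := qfact_ne_zero p; have := qfact_ne_zero q
  have := qint_ne_zero (s := p + 1) (by omega); have := qint_ne_zero (s := q + 1) (by omega)
  field_simp

lemma qbinom_pascal (a b : ℕ) :
    qbinom (a + b + 2) (a + 1)
      = vq ^ (a + 1) * qbinom (a + b + 1) (a + 1) + (vq⁻¹) ^ (b + 1) * qbinom (a + b + 1) a := by
  rw [qbinom, qbinom, qbinom, show a + b + 2 - (a + 1) = b + 1 by omega,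
    show a + b + 1 - (a + 1) = b by omega, show a + b + 1 - a = b + 1 by omega,
    qfact_succ (a + b + 1), qfact_succ a, qfact_succ b]
  have split := qint_add (a + 1) (b + 1)
  push_cast at split ⊢
  rw [show (a : ℤ) + b + 1 + 1 = a + 1 + (b + 1) by ring, split, ← zpow_natCast, ← zpow_natCast,
    inv_zpow', Nat.cast_add, Nat.cast_one, Nat.cast_add, Nat.cast_one]
  have := qfact_ne_zero a; have := qfact_ne_zero b
  have := qint_ne_zero (s := a + 1) (by omega); have := qint_ne_zero (s := b + 1) (by omega)
  field_simp

lemma serre_telescoping_coeff_eq_zero (p q : ℕ) :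
    (-1) ^ (p + 1) * qbinom (p + q + 1) (p + 1) * (vq ^ (-(p : ℤ)) * qint (p + 1))
      + (-1) ^ p * qbinom (p + q + 1) p *
          (vq ^ (-(q : ℤ)) * (qint (q + 1) * (vq ^ ((p + q : ℕ) : ℤ) * (vq ^ (-2 : ℤ)) ^ p)))
      = 0 := by
  have hv :
      vq ^ (-(q : ℤ)) * (vq ^ ((p + q : ℕ) : ℤ) * (vq ^ (-2 : ℤ)) ^ p) = vq ^ (-(p : ℤ)) := by
    rw [← zpow_natCast _ p, ← zpow_mul, ← zpow_add₀ vq_ne_zero, ← zpow_add₀ vq_ne_zero]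
    push_cast
    ring_nf
  linear_combination (-1) ^ p * qbinom (p + q + 1) p * qint (q + 1) * hv
    - (-1) ^ p * vq ^ (-(p : ℤ)) * qbinom_succ_mul_qint p q

lemma sum_range_alternating_qbinom_mul_vq_pow {E m : ℕ} (hm : m ≤ E) :
    ∑ p ∈ Finset.range (m + 1), (-1) ^ p * qbinom (E + 1) p * vq ^ (p * E)
      = (-1) ^ m * vq ^ (m * (E + 1)) * qbinom E m := by
  induction m with
  | zero => simp [qbinom_zero_right]
  | succ m ih =>
    rw [Finset.sum_range_succ, ih (by omega)]
    obtain ⟨b, rfl⟩ : ∃ b, E = m + b + 1 := ⟨E - m - 1, by omega⟩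
    rw [show m + b + 1 + 1 = m + b + 2 from rfl, qbinom_pascal m b]
    have e1 : vq⁻¹ ^ (b + 1) * vq ^ ((m + 1) * (m + b + 1)) = vq ^ (m * (m + b + 2)) := by
      rw [inv_pow, inv_mul_eq_iff_eq_mul₀ (pow_ne_zero _ vq_ne_zero), ← pow_add]
      ring_nf
    have e2 : vq ^ (m + 1) * vq ^ ((m + 1) * (m + b + 1)) = vq ^ ((m + 1) * (m + b + 2)) := by
      rw [← pow_add]
      ring_nf
    linear_combination (-1) ^ (m + 1) * qbinom (m + b + 1) m * e1
      + (-1) ^ (m + 1) * qbinom (m + b + 1) (m + 1) * e2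

lemma sum_range_alternating_qbinom_mul_vq_pow_eq_zero (E : ℕ) :
    ∑ p ∈ Finset.range (E + 2), (-1) ^ p * qbinom (E + 1) p * vq ^ (p * E) = 0 := by
  rw [Finset.sum_range_succ, sum_range_alternating_qbinom_mul_vq_pow le_rfl, qbinom_self,
    qbinom_self]
  ring

section FreeAlgebra

variable (G : GraphData I) (i : I)

abbrev mkUM : FreeAlgebra Kq I →ₐ[Kq] UM G := RingQuot.mkAlgHom Kq (SerreRel G)

lemma mkUM_ι (j : I) : mkUM G (FreeAlgebra.ι Kq j) = θ G j := rfl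

lemma mkUM_serreElem {a b : I} (h : a ≠ b) : mkUM G (serreElem G a b) = 0 := by
  simpa using RingQuot.mkAlgHom_rel Kq (SerreRel.serre (G := G) a b h)

def twistFree : FreeAlgebra Kq I →ₐ[Kq] UM G :=
  FreeAlgebra.lift Kq fun j => vq ^ (-cart G i j) • θ G j

lemma twistFree_ι (j : I) : twistFree G i (FreeAlgebra.ι Kq j) = vq ^ (-cart G i j) • θ G j :=
  FreeAlgebra.lift_ι_apply _ _

def generatorMatrix (j : I) : Matrix (Fin 2) (Fin 2) (UM G) :=
  !![θ G j, 0; if i = j then 1 else 0, vq ^ (-cart G i j) • θ G j]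

def triangularRepFree : FreeAlgebra Kq I →ₐ[Kq] Matrix (Fin 2) (Fin 2) (UM G) :=
  FreeAlgebra.lift Kq (generatorMatrix G i)

lemma triangularRepFree_ι (j : I) :
    triangularRepFree G i (FreeAlgebra.ι Kq j) = generatorMatrix G i j :=
  FreeAlgebra.lift_ι_apply _ _

lemma triangularRepFree_entries (a : FreeAlgebra Kq I) :
    triangularRepFree G i a 0 0 = mkUM G a ∧ triangularRepFree G i a 0 1 = 0 ∧
      triangularRepFree G i a 1 1 = twistFree G i a := by
  induction a using FreeAlgebra.induction with
  | grade0 r => simp [Matrix.algebraMap_matrix_apply]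
  | grade1 j => simp [triangularRepFree_ι, generatorMatrix, twistFree_ι, mkUM_ι]
  | mul a b ha hb =>
    simp [Matrix.mul_apply, Fin.sum_univ_two, ha.1, ha.2.1, ha.2.2, hb.1, hb.2.1, hb.2.2]
  | add a b ha hb => simp [ha.1, ha.2.1, ha.2.2, hb.1, hb.2.1, hb.2.2]

def rbarFree : FreeAlgebra Kq I →ₗ[Kq] UM G :=
  Matrix.entryLinearMap Kq (UM G) 1 0 ∘ₗ (triangularRepFree G i).toLinearMap

lemma rbarFree_apply (a : FreeAlgebra Kq I) : rbarFree G i a = triangularRepFree G i a 1 0 := rfl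

lemma rbarFree_mul (a b : FreeAlgebra Kq I) :
    rbarFree G i (a * b) = rbarFree G i a * mkUM G b + twistFree G i a * rbarFree G i b := by
  rw [rbarFree_apply, map_mul, Matrix.mul_apply, Fin.sum_univ_two,
    (triangularRepFree_entries G i b).1, (triangularRepFree_entries G i a).2.2, rbarFree_apply,
    rbarFree_apply]

lemma rbarFree_one : rbarFree G i 1 = 0 := by
  rw [rbarFree_apply, map_one, Matrix.one_apply_ne (by decide)]

lemma rbarFree_ι (j : I) : rbarFree G i (FreeAlgebra.ι Kq j) = if i = j then 1 else 0 := by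
  rw [rbarFree_apply, triangularRepFree_ι]
  rfl

lemma twistFree_ι_pow (j : I) (p : ℕ) :
    twistFree G i (FreeAlgebra.ι Kq j ^ p) = (vq ^ (-cart G i j)) ^ p • θ G j ^ p := by
  rw [map_pow, twistFree_ι, smul_pow]

lemma rbarFree_ι_pow_of_ne {j : I} (h : i ≠ j) (p : ℕ) :
    rbarFree G i (FreeAlgebra.ι Kq j ^ p) = 0 := by
  induction p with
  | zero => exact rbarFree_one G i
  | succ p ih =>
    rw [pow_succ, rbarFree_mul, ih, rbarFree_ι, if_neg h, zero_mul, mul_zero, add_zero]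

lemma rbarFree_ι_pow_succ (p : ℕ) :
    rbarFree G i (FreeAlgebra.ι Kq i ^ (p + 1))
      = (vq ^ (-(p : ℤ)) * qint (p + 1)) • θ G i ^ p := by
  induction p with
  | zero => simp [rbarFree_ι, qint_one]
  | succ p ih =>
    rw [pow_succ, rbarFree_mul, ih, rbarFree_ι, if_pos rfl, twistFree_ι_pow, mkUM_ι, mul_one,
      smul_mul_assoc, ← pow_succ, ← add_smul]
    congr 1
    rw [cart, if_pos rfl, ← zpow_natCast, ← zpow_mul, Nat.cast_succ,
      qint_add_one ((p : ℤ) + 1), show (-2 : ℤ) * (p + 1) = -(p + 1) + -(p + 1) by ring,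
      zpow_add₀ vq_ne_zero, show -(p : ℤ) = -(p + 1) + 1 by ring, zpow_add_one₀ vq_ne_zero]
    ring

end FreeAlgebra

section Serre

variable (G : GraphData I) (i : I)

open Finset FreeAlgebra

lemma serreElem_eq_sum_antidiagonal (a b : I) :
    serreElem G a b = ∑ pq ∈ antidiagonal (G.E a b + 1),
      ((-1 : Kq) ^ pq.1 * qbinom (G.E a b + 1) pq.1) •
        (ι Kq a ^ pq.1 * ι Kq b * ι Kq a ^ pq.2) := by
  rw [Nat.sum_antidiagonal_eq_sum_range_succ_mk, serreElem, add_comm 1, add_comm 2]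

lemma twistFree_monomial (a b : I) (p q : ℕ) :
    twistFree G i (ι Kq a ^ p * ι Kq b * ι Kq a ^ q)
      = ((vq ^ (-cart G i a)) ^ (p + q) * vq ^ (-cart G i b)) •
          mkUM G (ι Kq a ^ p * ι Kq b * ι Kq a ^ q) := by
  rw [map_mul, map_mul, twistFree_ι_pow, twistFree_ι, twistFree_ι_pow, smul_mul_smul_comm,
    smul_mul_smul_comm, map_mul, map_mul, map_pow, map_pow, mkUM_ι, mkUM_ι, pow_add]
  congr 1
  ring

lemma twistFree_serreElem {a b : I} (h : a ≠ b) : twistFree G i (serreElem G a b) = 0 := by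
  have homogeneous : twistFree G i (serreElem G a b)
      = ((vq ^ (-cart G i a)) ^ (G.E a b + 1) * vq ^ (-cart G i b)) •
          mkUM G (serreElem G a b) := by
    rw [serreElem_eq_sum_antidiagonal, map_sum, map_sum, smul_sum]
    refine sum_congr rfl fun ⟨p, q⟩ hpq => ?_
    rw [HasAntidiagonal.mem_antidiagonal] at hpq
    rw [map_smul, twistFree_monomial, hpq, map_smul, smul_comm]
  rw [homogeneous, mkUM_serreElem G h, smul_zero]

lemma rbarFree_serreElem_of_ne_of_ne {a b : I} (ha : i ≠ a) (hb : i ≠ b) :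
    rbarFree G i (serreElem G a b) = 0 := by
  rw [serreElem_eq_sum_antidiagonal, map_sum]
  refine sum_eq_zero fun pq _ => ?_
  rw [map_smul, rbarFree_mul, rbarFree_mul, rbarFree_ι_pow_of_ne G i ha, rbarFree_ι, if_neg hb,
    rbarFree_ι_pow_of_ne G i ha]
  simp

lemma rbarFree_serreElem_right {a : I} (ha : i ≠ a) : rbarFree G i (serreElem G a i) = 0 := by
  have hcart : -cart G i a = G.E a i := by rw [cart, if_neg ha, G.symm, neg_neg]
  have term : ∀ pq ∈ antidiagonal (G.E a i + 1),
      rbarFree G i (((-1 : Kq) ^ pq.1 * qbinom (G.E a i + 1) pq.1) •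
        (ι Kq a ^ pq.1 * ι Kq i * ι Kq a ^ pq.2))
      = ((-1 : Kq) ^ pq.1 * qbinom (G.E a i + 1) pq.1 * vq ^ (pq.1 * G.E a i)) •
          θ G a ^ (G.E a i + 1) := by
    rintro ⟨p, q⟩ hpq
    rw [HasAntidiagonal.mem_antidiagonal] at hpq
    rw [map_smul, rbarFree_mul, rbarFree_mul, rbarFree_ι_pow_of_ne G i ha, rbarFree_ι,
      if_pos rfl, rbarFree_ι_pow_of_ne G i ha, twistFree_ι_pow, hcart]
    simp only [map_pow, mkUM_ι, zero_mul, zero_add, mul_one, mul_zero, add_zero, smul_mul_assoc,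
      smul_smul]
    rw [← pow_add, hpq, zpow_natCast, ← pow_mul, mul_comm (G.E a i)]
  rw [serreElem_eq_sum_antidiagonal, map_sum, sum_congr rfl term, ← sum_smul,
    Nat.sum_antidiagonal_eq_sum_range_succ_mk, Nat.succ_eq_add_one,
    sum_range_alternating_qbinom_mul_vq_pow_eq_zero, zero_smul]

lemma rbarFree_serreElem_left {b : I} (hb : i ≠ b) : rbarFree G i (serreElem G i b) = 0 := by
  set E := G.E i b
  set c : ℕ → Kq := fun p => (-1) ^ p * qbinom (E + 1) p
  set F₁ : ℕ × ℕ → UM G := fun pq =>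
    rbarFree G i (ι Kq i ^ pq.1) * mkUM G (ι Kq b * ι Kq i ^ pq.2)
  set F₂ : ℕ × ℕ → UM G := fun pq =>
    twistFree G i (ι Kq i ^ pq.1 * ι Kq b) * rbarFree G i (ι Kq i ^ pq.2)
  have expand : ∀ pq ∈ antidiagonal (E + 1),
      rbarFree G i (c pq.1 • (ι Kq i ^ pq.1 * ι Kq b * ι Kq i ^ pq.2))
        = c pq.1 • F₁ pq + c pq.1 • F₂ pq := by
    intro pq _
    rw [map_smul, rbarFree_mul, rbarFree_mul, rbarFree_ι, if_neg hb]
    simp only [F₁, F₂, mul_assoc, map_mul, smul_add, mul_zero, add_zero]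
  -- The `θ_i^p θ_b θ_i^q` coming from `r̄ θ_i^{p+1}` in summand `p + 1` cancels the one coming
  -- from `r̄ θ_i^{q+1}` in summand `p`.
  rw [serreElem_eq_sum_antidiagonal, map_sum, sum_congr rfl expand, sum_add_distrib,
    Nat.sum_antidiagonal_succ, Nat.sum_antidiagonal_succ']
  simp only [F₁, F₂, pow_zero, rbarFree_one, zero_mul, mul_zero, smul_zero, zero_add]
  rw [← sum_add_distrib]
  refine sum_eq_zero fun ⟨p, q⟩ hpq => ?_
  replace hpq : p + q = E := HasAntidiagonal.mem_antidiagonal.mp hpq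
  have hcart : -cart G i b = ((p + q : ℕ) : ℤ) := by rw [cart, if_neg hb, neg_neg, hpq]
  simp only [rbarFree_ι_pow_succ, map_mul, twistFree_ι, map_pow, mkUM_ι, smul_pow,
    smul_mul_assoc, mul_smul_comm, smul_smul, mul_assoc]
  rw [← add_smul, hcart, cart, if_pos rfl]
  simp only [c]
  rw [← hpq, serre_telescoping_coeff_eq_zero, zero_smul]

end Serre

section Monomials

variable (G : GraphData I) (i : I)

lemma pairing_add (μ ν : I →₀ ℕ) : pairing G i (μ + ν) = pairing G i μ + pairing G i ν :=
  Finsupp.sum_add_index' (fun _ => by simp) fun _ _ _ => by push_cast; ring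

lemma pairing_single (j : I) : pairing G i (Finsupp.single j 1) = cart G i j := by
  simp [pairing]

lemma degw_cons (j : I) (l : List I) : degw (j :: l) = Finsupp.single j 1 + degw l := by
  simp [degw]

lemma word_cons (j : I) (l : List I) : word G (j :: l) = θ G j * word G l := by
  simp [word]

lemma word_mem_homog (l : List I) : word G l ∈ homog G (degw l) :=
  Submodule.subset_span ⟨l, rfl, rfl⟩

lemma θ_mem_homog (j : I) : θ G j ∈ homog G (Finsupp.single j 1) :=
  Submodule.subset_span ⟨[j], by simp [degw], by simp [word]⟩

lemma span_range_word : Submodule.span Kq (Set.range (word G)) = ⊤ := by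
  rw [eq_top_iff]
  rintro x -
  obtain ⟨a, rfl⟩ := RingQuot.mkAlgHom_surjective Kq (SerreRel G) x
  induction a using FreeAlgebra.induction with
  | grade0 c =>
    rw [AlgHom.commutes, Algebra.algebraMap_eq_smul_one]
    exact Submodule.smul_mem _ _ (Submodule.subset_span ⟨[], rfl⟩)
  | grade1 j => exact Submodule.subset_span ⟨[j], by simp [word, θ]⟩
  | mul a b ha hb =>
    rw [map_mul]
    have hab := Submodule.mul_mem_mul ha hb
    rw [Submodule.span_mul_span] at hab
    refine Submodule.span_mono ?_ hab
    rintro _ ⟨_, ⟨l, rfl⟩, _, ⟨m, rfl⟩, rfl⟩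
    exact ⟨l ++ m, by simp [word]⟩
  | add a b ha hb => exact map_add (RingQuot.mkAlgHom Kq (SerreRel G)) a b ▸ add_mem ha hb

end Monomials

section Quotient

variable (G : GraphData I) (i : I)

lemma triangularRepFree_serreElem {a b : I} (h : a ≠ b) :
    triangularRepFree G i (serreElem G a b) = 0 := by
  have hentries := triangularRepFree_entries G i (serreElem G a b)
  have hlower : rbarFree G i (serreElem G a b) = 0 := by
    by_cases hia : i = a
    · subst hia
      exact rbarFree_serreElem_left G i h
    by_cases hib : i = b
    · subst hib
      exact rbarFree_serreElem_right G i hia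
    exact rbarFree_serreElem_of_ne_of_ne G i hia hib
  ext k l
  fin_cases k <;> fin_cases l
  · exact hentries.1.trans (mkUM_serreElem G h)
  · exact hentries.2.1
  · exact hlower
  · exact hentries.2.2.trans (twistFree_serreElem G i h)

def triangularRep : UM G →ₐ[Kq] Matrix (Fin 2) (Fin 2) (UM G) :=
  RingQuot.liftAlgHom Kq ⟨triangularRepFree G i, fun _ _ h => by
    cases h with
    | serre a b h => rw [triangularRepFree_serreElem G i h, map_zero]⟩

lemma triangularRep_mkUM (a : FreeAlgebra Kq I) :
    triangularRep G i (mkUM G a) = triangularRepFree G i a :=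
  RingQuot.liftAlgHom_mkAlgHom_apply _ _ _ _

lemma triangularRep_apply_zero_zero (x : UM G) : triangularRep G i x 0 0 = x := by
  obtain ⟨a, rfl⟩ := RingQuot.mkAlgHom_surjective Kq (SerreRel G) x
  exact (triangularRep_mkUM G i a ▸ triangularRepFree_entries G i a).1

lemma triangularRep_apply_zero_one (x : UM G) : triangularRep G i x 0 1 = 0 := by
  obtain ⟨a, rfl⟩ := RingQuot.mkAlgHom_surjective Kq (SerreRel G) x
  exact (triangularRep_mkUM G i a ▸ triangularRepFree_entries G i a).2.1

lemma triangularRep_θ (j : I) : triangularRep G i (θ G j) = generatorMatrix G i j :=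
  (triangularRep_mkUM G i _).trans (triangularRepFree_ι G i j)

lemma triangularRep_mul_apply_one_one (x y : UM G) :
    triangularRep G i (x * y) 1 1 = triangularRep G i x 1 1 * triangularRep G i y 1 1 := by
  rw [map_mul, Matrix.mul_apply, Fin.sum_univ_two, triangularRep_apply_zero_one, mul_zero,
    zero_add]

lemma triangularRep_word_apply_one_one (l : List I) :
    triangularRep G i (word G l) 1 1 = vq ^ (-pairing G i (degw l)) • word G l := by
  induction l with
  | nil => simp [word, degw, pairing]
  | cons j l ih =>
    rw [word_cons, triangularRep_mul_apply_one_one, ih, triangularRep_θ, degw_cons, pairing_add,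
      pairing_single, neg_add, zpow_add₀ vq_ne_zero, mul_smul_comm, mul_smul,
      show generatorMatrix G i j 1 1 = vq ^ (-cart G i j) • θ G j from rfl, smul_mul_assoc,
      smul_comm]

lemma triangularRep_apply_one_one_of_mem_homog {μ : I →₀ ℕ} {x : UM G} (hx : x ∈ homog G μ) :
    triangularRep G i x 1 1 = vq ^ (-pairing G i μ) • x := by
  induction hx using Submodule.span_induction with
  | mem x hx =>
    obtain ⟨l, rfl, rfl⟩ := hx
    exact triangularRep_word_apply_one_one G i l
  | zero => simp
  | add x y _ _ hx hy => rw [map_add, Matrix.add_apply, hx, hy, smul_add]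
  | smul c x _ hx => rw [map_smul, Matrix.smul_apply, hx, smul_comm]

end Quotient

section TwistedDerivation

variable (G : GraphData I) (i : I)

def IsTwistedDerivation (r : UM G →ₗ[Kq] UM G) : Prop :=
  ∀ (μ ν : I →₀ ℕ) (x y : UM G), x ∈ homog G μ → y ∈ homog G ν →
    r (x * y) = r x * y + vq ^ (-(pairing G i μ)) • (x * r y)

variable {G i} in
lemma IsTwistedDerivation.ext {r r' : UM G →ₗ[Kq] UM G} (hr : IsTwistedDerivation G i r)
    (hr' : IsTwistedDerivation G i r') (h1 : r 1 = r' 1) (hθ : ∀ j, r (θ G j) = r' (θ G j)) :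
    r = r' := by
  refine LinearMap.ext_on (span_range_word G) ?_
  rintro _ ⟨l, rfl⟩
  induction l with
  | nil => exact h1
  | cons j l ih =>
    rw [word_cons, hr _ _ _ _ (θ_mem_homog G j) (word_mem_homog G l),
      hr' _ _ _ _ (θ_mem_homog G j) (word_mem_homog G l), hθ, ih]

def rbar : UM G →ₗ[Kq] UM G :=
  Matrix.entryLinearMap Kq (UM G) 1 0 ∘ₗ (triangularRep G i).toLinearMap

lemma rbar_apply (x : UM G) : rbar G i x = triangularRep G i x 1 0 := rfl

lemma rbar_one : rbar G i 1 = 0 := by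
  rw [rbar_apply, map_one, Matrix.one_apply_ne (by decide)]

lemma rbar_θ (j : I) : rbar G i (θ G j) = if i = j then 1 else 0 := by
  rw [rbar_apply, triangularRep_θ]
  rfl

lemma isTwistedDerivation_rbar : IsTwistedDerivation G i (rbar G i) := by
  intro μ _ x y hx _
  rw [rbar_apply, map_mul, Matrix.mul_apply, Fin.sum_univ_two, triangularRep_apply_zero_zero,
    triangularRep_apply_one_one_of_mem_homog G i hx, smul_mul_assoc, rbar_apply, rbar_apply]

end TwistedDerivation

/-- There exists a unique `ℚ(v)`-linear map `_i r̄ : f → f` with `_i r̄(1) = 0`,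
`_i r̄(θ_j) = δ_{ij}`, and
`_i r̄(xy) = _i r̄(x)·y + v^{(i,-|x|)}·x·_i r̄(y)` for homogeneous `x, y`. -/
theorem existsUnique_ibar_r (G : GraphData I) (i : I) :
    ∃! r : UM G →ₗ[Kq] UM G,
      r 1 = 0 ∧
      (∀ j : I, r (θ G j) = if i = j then 1 else 0) ∧
      (∀ (μ ν : I →₀ ℕ) (x y : UM G), x ∈ homog G μ → y ∈ homog G ν →
        r (x * y) = r x * y + vq ^ (-(pairing G i μ)) • (x * r y)) := by
  refine ⟨rbar G i, ⟨rbar_one G i, rbar_θ G i, isTwistedDerivation_rbar G i⟩, ?_⟩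
  rintro r ⟨h1, hθ, hr : IsTwistedDerivation G i r⟩
  exact hr.ext (isTwistedDerivation_rbar G i) (h1.trans (rbar_one G i).symm)
    fun j => (hθ j).trans (rbar_θ G i j).symm
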